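/- arXiv:1606.04383 — 7 statements merged into one kernel-verified Lean document; each statement's English description precedes it below -/
import Mathlib

section
/- If G ≤ Sym(Ω) and S ⊆ Ω has size n − k (where |Ω| = n), then S intersects the support of every permutation g ∈ G with |supp(g)| > k. Consequently, S is a base for G if and only if S is a base for the subgroup of G generated by all elements of G of support size at most k. -/
open Finset

/-- If `S ⊆ Ω` has size `n - k`, then `S` meets the support of every `g ∈ G` with
`|supp g| > k`; consequently `S` is a base for `G` iff it is a base for the subgroup
generated by elements of `G` of support size at most `k`. -/
theorem base_iff_base_of_small_support
    {Ω : Type*} [Fintype Ω] [DecidableEq Ω]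
    (G : Subgroup (Equiv.Perm Ω)) (k : ℕ) (S : Finset Ω)
    (hS : S.card = Fintype.card Ω - k) :
    (∀ g ∈ G, k < (univ.filter fun x => g x ≠ x).card → ∃ x ∈ S, g x ≠ x) ∧
    ((∀ g ∈ G, (∀ x ∈ S, g x = x) → g = 1) ↔
      (∀ g ∈ Subgroup.closure {g : Equiv.Perm Ω |
          g ∈ G ∧ (univ.filter fun x => g x ≠ x).card ≤ k},
        (∀ x ∈ S, g x = x) → g = 1)) := by
  -- auxiliary fact: if g fixes S pointwise then its support has size ≤ k
  have key : ∀ g : Equiv.Perm Ω, (∀ x ∈ S, g x = x) →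
      (univ.filter fun x => g x ≠ x).card ≤ k := by
    intro g hg
    have hsub : (univ.filter fun x => g x ≠ x) ⊆ univ \ S := by
      intro x hx
      simp only [mem_filter, mem_univ, true_and] at hx
      simp only [mem_sdiff, mem_univ, true_and]
      exact fun hxS => hx (hg x hxS)
    have h1 := card_le_card hsub
    rw [card_sdiff_of_subset (subset_univ S), card_univ] at h1
    omega
  constructor
  · intro g hg hk
    by_contra h
    push_neg at h
    exact absurd (key g h) (by omega)
  · constructor
    · intro h g hg hfix
      have hgG : g ∈ G := by
        exact (Subgroup.closure_le G).2 (fun x hx => hx.1) hg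
      exact h g hgG hfix
    · intro h g hg hfix
      have : g ∈ Subgroup.closure {g : Equiv.Perm Ω |
          g ∈ G ∧ (univ.filter fun x => g x ≠ x).card ≤ k} :=
        Subgroup.subset_closure ⟨hg, key g hfix⟩
      exact h g this hfix
end

section
/- Let X be a connected colored graph with stable color classes of size 3, joined pairwise by perfect matchings or no edges, admitting an automorphism σ that acts as a 3-cycle on each color class. Then every fractional automorphism Y of X is a convex combination α·I + β·P_σ + γ·P_{σ²} of the permutation matrices of the identity, σ, and σ², where α + β + γ = 1. In particular, X is compact. -/
open Finset

/-- A connected colored graph with color classes of size 3 joined pairwise by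
perfect matchings or no edges, admitting an automorphism acting as a 3-cycle on
every color class, is compact: every fractional automorphism is a convex
combination `α·I + β·P_σ + γ·P_{σ²}`. -/
theorem compact_of_cyclic_automorphism
    {V : Type*} [Fintype V] [DecidableEq V]
    (X : SimpleGraph V) [DecidableRel X.Adj]
    (m : ℕ) (c : V → Fin m)
    (hsize : ∀ i : Fin m, (univ.filter fun v => c v = i).card = 3)
    (hintern : ∀ u v : V, c u = c v → ¬ X.Adj u v)
    (hmatch : ∀ i j : Fin m, i ≠ j →
      (∀ u v : V, c u = i → c v = j → ¬ X.Adj u v) ∨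
      ((∀ u : V, c u = i → ∃! v : V, c v = j ∧ X.Adj u v) ∧
       (∀ v : V, c v = j → ∃! u : V, c u = i ∧ X.Adj u v)))
    (hconn : X.Connected)
    (σ : Equiv.Perm V)
    (hσadj : ∀ u v : V, X.Adj (σ u) (σ v) ↔ X.Adj u v)
    (hσcol : ∀ v : V, c (σ v) = c v)
    (hσcyc : ∀ v : V, σ v ≠ v ∧ σ (σ v) ≠ v ∧ σ (σ (σ v)) = v) :
    ∀ Y : Matrix V V ℝ,
      (∀ u v, 0 ≤ Y u v) → (∀ u, ∑ v, Y u v = 1) → (∀ v, ∑ u, Y u v = 1) →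
      (∀ u v : V, c u ≠ c v → Y u v = 0) →
      X.adjMatrix ℝ * Y = Y * X.adjMatrix ℝ →
      ∃ α β γ : ℝ, 0 ≤ α ∧ 0 ≤ β ∧ 0 ≤ γ ∧ α + β + γ = 1 ∧
        Y = α • (1 : Matrix V V ℝ)
          + β • (Matrix.of fun u v => if σ v = u then (1 : ℝ) else 0)
          + γ • (Matrix.of fun u v => if σ (σ v) = u then (1 : ℝ) else 0) := by
  intro Y hpos hrow hcol hzero hcomm
  have hinj := σ.injective
  have hadj' : ∀ a b : V, X.Adj a b → X.Adj (σ a) (σ b) := fun a b h => (hσadj a b).mpr h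
  have hdist : ∀ v : V, σ v ≠ v ∧ σ (σ v) ≠ v ∧ σ v ≠ σ (σ v) := fun v =>
    ⟨(hσcyc v).1, (hσcyc v).2.1, fun h => (hσcyc v).1 (hinj h).symm⟩
  -- edge lemma
  have edge : ∀ (g : V → V), (∀ a b : V, X.Adj a b → X.Adj (g a) (g b)) →
      (∀ a : V, c (g a) = c a) → ∀ u v : V, X.Adj u v → Y (g v) v = Y (g u) u := by
    intro g hg hgc u v huv
    have hcuv : c u ≠ c v := fun h => hintern u v h huv
    have hguv : X.Adj (g u) (g v) := hg u v huv
    rcases hmatch (c u) (c v) hcuv with hm | ⟨hm1, hm2⟩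
    · exact absurd hguv (hm (g u) (g v) (hgc u) (hgc v))
    have key : (X.adjMatrix ℝ * Y) (g u) v = (Y * X.adjMatrix ℝ) (g u) v := by
      rw [hcomm]
    rw [SimpleGraph.adjMatrix_mul_apply, SimpleGraph.mul_adjMatrix_apply] at key
    have hL : ∑ x ∈ X.neighborFinset (g u), Y x v = Y (g v) v := by
      apply Finset.sum_eq_single_of_mem
      · rw [SimpleGraph.mem_neighborFinset]; exact hguv
      · intro x hx hne
        rw [SimpleGraph.mem_neighborFinset] at hx
        by_cases hcx : c x = c v
        · obtain ⟨b, _, hbu⟩ := hm1 (g u) (hgc u)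
          exact absurd ((hbu x ⟨hcx, hx⟩).trans (hbu (g v) ⟨hgc v, hguv⟩).symm) hne
        · exact hzero x v hcx
    have hR : ∑ x ∈ X.neighborFinset v, Y (g u) x = Y (g u) u := by
      apply Finset.sum_eq_single_of_mem
      · rw [SimpleGraph.mem_neighborFinset]; exact huv.symm
      · intro x hx hne
        rw [SimpleGraph.mem_neighborFinset] at hx
        by_cases hcx : c x = c u
        · obtain ⟨b, _, hbu⟩ := hm2 v rfl
          exact absurd ((hbu x ⟨hcx, hx.symm⟩).trans (hbu u ⟨rfl, huv⟩).symm) hne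
        · exact hzero (g u) x (by rw [hgc u]; exact fun h => hcx h.symm)
    rw [hL, hR] at key
    exact key
  -- constancy along walks
  have const : ∀ (g : V → V), (∀ a b : V, X.Adj a b → X.Adj (g a) (g b)) →
      (∀ a : V, c (g a) = c a) → ∀ u v : V, Y (g u) u = Y (g v) v := by
    intro g hg hgc u v
    obtain ⟨p⟩ := hconn u v
    induction p with
    | nil => rfl
    | cons h q ih => rw [← ih, edge g hg hgc _ _ h]
  -- color classes
  have hclass : ∀ v : V, (univ.filter fun u => c u = c v) = {v, σ v, σ (σ v)} := by
    intro v
    have hnm1 : v ∉ ({σ v, σ (σ v)} : Finset V) := by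
      simp only [Finset.mem_insert, Finset.mem_singleton]
      push_neg
      exact ⟨Ne.symm (hdist v).1, Ne.symm (hdist v).2.1⟩
    have hnm2 : σ v ∉ ({σ (σ v)} : Finset V) := by
      simp only [Finset.mem_singleton]
      exact (hdist v).2.2
    symm
    apply Finset.eq_of_subset_of_card_le
    · intro x hx
      simp only [Finset.mem_insert, Finset.mem_singleton] at hx
      simp only [Finset.mem_filter, Finset.mem_univ, true_and]
      rcases hx with rfl | rfl | rfl
      · rfl
      · exact hσcol v
      · rw [hσcol, hσcol]
    · rw [hsize (c v), Finset.card_insert_of_notMem hnm1,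
        Finset.card_insert_of_notMem hnm2, Finset.card_singleton]
  obtain ⟨u0⟩ := hconn.nonempty
  refine ⟨Y u0 u0, Y (σ u0) u0, Y (σ (σ u0)) u0, hpos _ _, hpos _ _, hpos _ _, ?_, ?_⟩
  · -- sum = 1
    have hnm1 : u0 ∉ ({σ u0, σ (σ u0)} : Finset V) := by
      simp only [Finset.mem_insert, Finset.mem_singleton]
      push_neg
      exact ⟨Ne.symm (hdist u0).1, Ne.symm (hdist u0).2.1⟩
    have hnm2 : σ u0 ∉ ({σ (σ u0)} : Finset V) := by
      simp only [Finset.mem_singleton]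
      exact (hdist u0).2.2
    have h1 := hcol u0
    rw [← Finset.sum_subset (Finset.subset_univ ({u0, σ u0, σ (σ u0)} : Finset V))
      (fun x _ hx => hzero x u0 (fun hcx => hx (by
        rw [← hclass u0]
        exact Finset.mem_filter.mpr ⟨Finset.mem_univ x, hcx⟩)))] at h1
    rw [Finset.sum_insert hnm1, Finset.sum_insert hnm2, Finset.sum_singleton] at h1
    linarith
  · -- matrix equality
    ext u v
    simp only [Matrix.add_apply, Matrix.smul_apply, Matrix.one_apply, Matrix.of_apply,
      smul_eq_mul]
    by_cases hc : c u = c v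
    · have hu : u ∈ ({v, σ v, σ (σ v)} : Finset V) := by
        rw [← hclass v]
        exact Finset.mem_filter.mpr ⟨Finset.mem_univ u, hc⟩
      simp only [Finset.mem_insert, Finset.mem_singleton] at hu
      have hne1 := (hdist v).1
      have hne2 := (hdist v).2.1
      have hne3 := (hdist v).2.2
      rcases hu with rfl | rfl | rfl
      · rw [if_pos rfl, if_neg hne1, if_neg hne2]
        have := const id (fun a b h => h) (fun a => rfl) u u0
        simpa using this
      · rw [if_neg hne1, if_pos rfl, if_neg (Ne.symm hne3)]
        have := const σ hadj' hσcol v u0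
        simpa using this
      · rw [if_neg hne2, if_neg hne3, if_pos rfl]
        have := const (fun a => σ (σ a)) (fun a b h => hadj' _ _ (hadj' _ _ h))
          (fun a => by rw [hσcol, hσcol]) v u0
        simpa using this
    · have huv : u ≠ v := fun h => hc (by rw [h])
      have h1 : σ v ≠ u := fun h => hc (by rw [← h, hσcol])
      have h2 : σ (σ v) ≠ u := fun h => hc (by rw [← h, hσcol, hσcol])
      rw [hzero u v hc, if_neg huv, if_neg h1, if_neg h2]
      ring
end

section
/- Let X be a colored graph whose color classes form a stable (equitable) partition with all classes of size at most 3, where every vertex class induces an empty graph. Then there are no edges between two color classes of different sizes, and between two color classes of the same size the bipartite graph of edges is either empty, a perfect matching, or the bipartite complement of a perfect matching; after complementing, one may assume it is empty or a perfect matching. -/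
/-!
Let `u ~ v` be an edge between the classes `C_i` and `C_j`, and let `x` (resp. `y`) be the
common number of neighbours a vertex of `C_i` has in `C_j` (resp. of `C_j` in `C_i`); both are
positive. Counting the edges between the two classes from either side gives
`|C_i| x = |C_j| y`, and the bound of half the possible edges gives `2x ≤ |C_j| ≤ 3` and
`2y ≤ |C_i| ≤ 3`. Hence `x = y = 1`, so `|C_i| = |C_j|` and the edges form a perfect matching.
-/

open Finset

theorem Finset.card_filter_product_eq_sum_card_bipartiteAbove {α β : Type*}
    (r : α → β → Prop) [∀ a b, Decidable (r a b)] (s : Finset α) (t : Finset β) :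
    #{p ∈ s ×ˢ t | r p.1 p.2} = ∑ a ∈ s, #(t.bipartiteAbove r a) := by
  simp_rw [card_filter, sum_product, bipartiteAbove, card_filter]

theorem Nat.eq_one_of_two_mul_le_of_le_three {a b x y : ℕ} (ha : 0 < a) (ha3 : a ≤ 3)
    (hb3 : b ≤ 3) (hx : 0 < x) (hcount : a * x = b * y)
    (hhalf : 2 * (a * x) ≤ a * b) : x = 1 ∧ y = 1 ∧ a = b := by
  interval_cases a <;> interval_cases b <;> omega

namespace SimpleGraph

variable {V : Type*} [Fintype V] (X : SimpleGraph V) [DecidableRel X.Adj] {m : ℕ}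
  (c : V → Fin m)

def IsEquitable : Prop :=
  ∀ (j : Fin m) (u v : V), c u = c v →
    #{w | c w = j ∧ X.Adj u w} = #{w | c w = j ∧ X.Adj v w}

theorem card_edges_between_eq_sum (i j : Fin m) :
    #{p : V × V | c p.1 = i ∧ c p.2 = j ∧ X.Adj p.1 p.2} =
      ∑ u ∈ {v | c v = i}, #{w | c w = j ∧ X.Adj u w} := by
  have hedges : ({p : V × V | c p.1 = i ∧ c p.2 = j ∧ X.Adj p.1 p.2} : Finset (V × V)) =
      (({v | c v = i} : Finset V) ×ˢ ({v | c v = j} : Finset V)).filter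
        fun p => X.Adj p.1 p.2 := by
    ext p
    simp only [mem_filter, mem_univ, mem_product, true_and, and_assoc]
  rw [hedges, card_filter_product_eq_sum_card_bipartiteAbove]
  simp only [bipartiteAbove, filter_filter]

variable {X c}

theorem card_edges_between_eq_card_mul (hX : X.IsEquitable c) {i j : Fin m} {u : V}
    (hu : c u = i) :
    #{p : V × V | c p.1 = i ∧ c p.2 = j ∧ X.Adj p.1 p.2} =
      #{v | c v = i} * #{w | c w = j ∧ X.Adj u w} := by
  rw [card_edges_between_eq_sum, ← smul_eq_mul, ← sum_const]
  refine sum_congr rfl fun u' hu' => hX j u' u ?_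
  rw [(mem_filter_univ u').1 hu', hu]

theorem card_mul_card_neighbors_eq (hX : X.IsEquitable c) {u v : V} :
    #{w | c w = c u} * #{w | c w = c v ∧ X.Adj u w} =
      #{w | c w = c v} * #{w | c w = c u ∧ X.Adj v w} := by
  refine card_mul_eq_card_mul X.Adj (fun u' hu' => ?_) (fun v' hv' => ?_)
  · rw [bipartiteAbove, filter_filter]
    exact hX _ u' u ((mem_filter_univ u').1 hu')
  · simp_rw [bipartiteBelow, filter_filter, X.adj_comm _ v']
    exact hX _ v' v ((mem_filter_univ v').1 hv')

theorem card_neighbors_eq_one_of_adj (hX : X.IsEquitable c)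
    (hsize : ∀ i, #{v | c v = i} ≤ 3) {u v : V}
    (hhalf : 2 * #{p : V × V | c p.1 = c u ∧ c p.2 = c v ∧ X.Adj p.1 p.2} ≤
      #{w | c w = c u} * #{w | c w = c v})
    (huv : X.Adj u v) :
    #{w | c w = c v ∧ X.Adj u w} = 1 ∧ #{w | c w = c u ∧ X.Adj v w} = 1 ∧
      #{w | c w = c u} = #{w | c w = c v} := by
  rw [card_edges_between_eq_card_mul hX rfl] at hhalf
  exact Nat.eq_one_of_two_mul_le_of_le_three
    (card_pos.2 ⟨u, mem_filter_univ u |>.2 rfl⟩) (hsize _) (hsize _)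
    (card_pos.2 ⟨v, mem_filter_univ v |>.2 ⟨rfl, huv⟩⟩) (card_mul_card_neighbors_eq hX) hhalf

theorem existsUnique_adj_of_card_eq_one (hX : X.IsEquitable c) {j : Fin m} {u₀ u : V}
    (hu₀ : #{w | c w = j ∧ X.Adj u₀ w} = 1) (hu : c u = c u₀) :
    ∃! v, c v = j ∧ X.Adj u v := by
  rw [Fintype.existsUnique_iff_card_one, hX j u u₀ hu, hu₀]

end SimpleGraph

open SimpleGraph in
theorem stable_three_bounded_structure_general
    {V : Type*} [Fintype V]
    (X : SimpleGraph V) [DecidableRel X.Adj]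
    (m : ℕ) (c : V → Fin m)
    (hsize : ∀ i : Fin m, (univ.filter fun v => c v = i).card ≤ 3)
    (hstable : ∀ (j : Fin m) (u v : V), c u = c v →
      (univ.filter fun w => c w = j ∧ X.Adj u w).card =
      (univ.filter fun w => c w = j ∧ X.Adj v w).card)
    (hhalf : ∀ i j : Fin m, i ≠ j →
      2 * ((univ : Finset (V × V)).filter fun p =>
          c p.1 = i ∧ c p.2 = j ∧ X.Adj p.1 p.2).card ≤
        (univ.filter fun v => c v = i).card * (univ.filter fun v => c v = j).card) :
    (∀ i j : Fin m,
      (univ.filter fun v => c v = i).card ≠ (univ.filter fun v => c v = j).card →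
      ∀ u v : V, c u = i → c v = j → ¬ X.Adj u v) ∧
    (∀ i j : Fin m, i ≠ j →
      (univ.filter fun v => c v = i).card = (univ.filter fun v => c v = j).card →
      (∀ u v : V, c u = i → c v = j → ¬ X.Adj u v) ∨
      ((∀ u : V, c u = i → ∃! v : V, c v = j ∧ X.Adj u v) ∧
       (∀ v : V, c v = j → ∃! u : V, c u = i ∧ X.Adj u v))) := by
  constructor
  · rintro i j hcard u v rfl rfl huv
    exact hcard (card_neighbors_eq_one_of_adj hstable hsize
      (hhalf _ _ fun h => hcard (by rw [h])) huv).2.2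
  · intro i j hij _
    by_cases hempty : ∀ u v : V, c u = i → c v = j → ¬ X.Adj u v
    · exact .inl hempty
    push Not at hempty
    obtain ⟨u₀, v₀, rfl, rfl, huv⟩ := hempty
    obtain ⟨hu₀, hv₀, -⟩ := card_neighbors_eq_one_of_adj hstable hsize (hhalf _ _ hij) huv
    refine .inr ⟨fun u hu => existsUnique_adj_of_card_eq_one hstable hu₀ hu, fun v hv => ?_⟩
    simpa only [X.adj_comm] using existsUnique_adj_of_card_eq_one hstable hv₀ hv

/-- For a stable (equitable) partition with classes of size at most 3, classes
inducing empty graphs, and at most `|C_i|·|C_j|/2` edges between any two classes: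
there are no edges between classes of different sizes, and between classes of the
same size the bipartite graph is empty or a perfect matching. -/
theorem stable_three_bounded_structure
    {V : Type*} [Fintype V] [DecidableEq V]
    (X : SimpleGraph V) [DecidableRel X.Adj]
    (m : ℕ) (c : V → Fin m)
    (hsize : ∀ i : Fin m, (univ.filter fun v => c v = i).card ≤ 3)
    (hintern : ∀ u v : V, c u = c v → ¬ X.Adj u v)
    (hstable : ∀ (j : Fin m) (u v : V), c u = c v →
      (univ.filter fun w => c w = j ∧ X.Adj u w).card =
      (univ.filter fun w => c w = j ∧ X.Adj v w).card)
    (hhalf : ∀ i j : Fin m, i ≠ j →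
      2 * ((univ : Finset (V × V)).filter fun p =>
          c p.1 = i ∧ c p.2 = j ∧ X.Adj p.1 p.2).card ≤
        (univ.filter fun v => c v = i).card * (univ.filter fun v => c v = j).card) :
    (∀ i j : Fin m,
      (univ.filter fun v => c v = i).card ≠ (univ.filter fun v => c v = j).card →
      ∀ u v : V, c u = i → c v = j → ¬ X.Adj u v) ∧
    (∀ i j : Fin m, i ≠ j →
      (univ.filter fun v => c v = i).card = (univ.filter fun v => c v = j).card →
      (∀ u v : V, c u = i → c v = j → ¬ X.Adj u v) ∨
      ((∀ u : V, c u = i → ∃! v : V, c v = j ∧ X.Adj u v) ∧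
       (∀ v : V, c v = j → ∃! u : V, c u = i ∧ X.Adj u v))) :=
  stable_three_bounded_structure_general X m c hsize hstable hhalf
end

section
/- Let X = (V,E) be a twin-free graph with |V| > 2k. Then there exists a set S ⊆ V of size k such that individualizing all vertices of V \ S and running color refinement produces the discrete partition (all color classes singletons). Equivalently, there exists such S of size k whose complement distinguishes all vertices. -/
open Finset

/-- A coloring is equitable if vertices of equal color have, for each color `k`,
equally many neighbors of color `k`. -/
def IsEquitable {V : Type*} [Fintype V] (X : SimpleGraph V) [DecidableRel X.Adj]
    (α : V → ℕ) [DecidableEq V] : Prop :=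
  ∀ u v : V, α u = α v → ∀ k : ℕ,
    (univ.filter fun w => X.Adj u w ∧ α w = k).card =
    (univ.filter fun w => X.Adj v w ∧ α w = k).card

/-- Color refinement after individualizing `V \ S` makes the graph discrete:
every equitable coloring refining the initial coloring (in which each vertex of
`V \ S` has a unique color) is discrete. -/
def DiscreteAfterIndividualizing {V : Type*} [Fintype V] [DecidableEq V]
    (X : SimpleGraph V) [DecidableRel X.Adj] (S : Finset V) : Prop :=
  ∀ α : V → ℕ, IsEquitable X α →
    (∀ u v : V, α u = α v → u = v ∨ (u ∈ S ∧ v ∈ S)) →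
    Function.Injective α

section CRAux

open scoped Classical

variable {V : Type*} [Fintype V] [DecidableEq V] (X : SimpleGraph V) [DecidableRel X.Adj]

/-- Number of neighbors of `u` in the `r`-class of `w`. -/
noncomputable def NCnt (r : Setoid V) (u w : V) : ℕ :=
  (univ.filter fun x => X.Adj u x ∧ r x w).card

/-- A setoid is equitable if related vertices have equally many neighbors in each class. -/
def EquitS (r : Setoid V) : Prop :=
  ∀ u v : V, r u v → ∀ w : V, NCnt X r u w = NCnt X r v w

/-- Counting with respect to a coarser setoid. -/
lemma keyCount {r s : Setoid V} (hr : EquitS X r) (hrs : r ≤ s) {u v : V} (huv : r u v)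
    (w : V) : NCnt X s u w = NCnt X s v w := by
  have main : ∀ a : V, NCnt X s a w =
      ∑ q : Quotient r, (univ.filter fun x => (X.Adj a x ∧ s x w) ∧ Quotient.mk r x = q).card := by
    intro a
    unfold NCnt
    rw [Finset.card_eq_sum_card_fiberwise (f := fun x => Quotient.mk r x)
      (t := (Finset.univ : Finset (Quotient r))) (fun x _ => Finset.mem_univ _)]
    simp only [Finset.filter_filter]
  rw [main u, main v]
  refine Finset.sum_congr rfl fun q _ => ?_
  obtain ⟨t, rfl⟩ := Quotient.exists_rep q
  by_cases hts : s t w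
  · have he : ∀ a : V, (univ.filter fun x => (X.Adj a x ∧ s x w) ∧ Quotient.mk r x = Quotient.mk r t)
        = (univ.filter fun x => X.Adj a x ∧ r x t) := by
      intro a
      ext x
      simp only [Finset.mem_filter, Finset.mem_univ, true_and, Quotient.eq]
      constructor
      · rintro ⟨⟨hadj, _⟩, hxt⟩; exact ⟨hadj, hxt⟩
      · rintro ⟨hadj, hxt⟩
        exact ⟨⟨hadj, s.trans' (Setoid.le_def.1 hrs hxt) hts⟩, hxt⟩
    rw [he u, he v]
    exact hr u v huv t
  · have he : ∀ a : V, (univ.filter fun x => (X.Adj a x ∧ s x w) ∧ Quotient.mk r x = Quotient.mk r t)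
        = (∅ : Finset V) := by
      intro a
      ext x
      simp only [Finset.mem_filter, Finset.mem_univ, true_and, Quotient.eq,
        Finset.notMem_empty, iff_false]
      rintro ⟨⟨hadj, hxw⟩, hxt⟩
      exact hts (s.trans' (s.symm' (Setoid.le_def.1 hrs hxt)) hxw)
    rw [he u, he v]

lemma equitS_sSup {S : Set (Setoid V)} (h : ∀ r ∈ S, EquitS X r) : EquitS X (sSup S) := by
  intro u v huv w
  rw [Setoid.sSup_eq_eqvGen] at huv
  have huv' : Relation.EqvGen (fun x y => ∃ r : Setoid V, r ∈ S ∧ r x y) u v := huv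
  clear huv
  induction huv' with
  | rel x y hxy =>
    obtain ⟨r, hrS, hrxy⟩ := hxy
    exact keyCount X (h r hrS) (le_sSup hrS) hrxy w
  | refl x => rfl
  | symm x y _ ih => exact ih.symm
  | trans x y z _ _ ih1 ih2 => exact ih1.trans ih2

/-- The partition with one class `T` and all other vertices singletons. -/
def piT (T : Finset V) : Setoid V :=
  ⟨fun x y => x = y ∨ (x ∈ T ∧ y ∈ T), by
    refine ⟨fun x => Or.inl rfl, ?_, ?_⟩
    · rintro x y (rfl | h)
      · exact Or.inl rfl
      · exact Or.inr ⟨h.2, h.1⟩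
    · rintro x y z (rfl | h1) h2
      · exact h2
      · rcases h2 with rfl | h2
        · exact Or.inr h1
        · exact Or.inr ⟨h1.1, h2.2⟩⟩

@[simp] lemma piT_rel {V : Type*} [Fintype V] [DecidableEq V] (T : Finset V) (x y : V) :
    (piT T) x y ↔ (x = y ∨ (x ∈ T ∧ y ∈ T)) := Iff.rfl

lemma piT_mono {V : Type*} [Fintype V] [DecidableEq V] {T T' : Finset V} (h : T ⊆ T') :
    (piT T : Setoid V) ≤ piT T' := by
  rw [Setoid.le_def]
  rintro x y (rfl | hm)
  · exact Or.inl rfl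
  · exact Or.inr ⟨h hm.1, h hm.2⟩

/-- The coarsest equitable refinement of `piT T`. -/
noncomputable def rho (T : Finset V) : Setoid V :=
  sSup {r : Setoid V | EquitS X r ∧ r ≤ piT T}

lemma equitS_rho (T : Finset V) : EquitS X (rho X T) :=
  equitS_sSup X fun _ hr => hr.1

lemma rho_le (T : Finset V) : rho X T ≤ piT T :=
  sSup_le fun _ hr => hr.2

lemma le_rho {T : Finset V} {r : Setoid V} (h1 : EquitS X r) (h2 : r ≤ piT T) :
    r ≤ rho X T := le_sSup ⟨h1, h2⟩

/-- Split the vertex `w` away from its class. -/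
def spl (r : Setoid V) (w : V) : Setoid V :=
  ⟨fun x y => r x y ∧ (x = w ↔ y = w), by
    refine ⟨fun x => ⟨r.refl' x, Iff.rfl⟩, ?_, ?_⟩
    · rintro x y ⟨h1, h2⟩
      exact ⟨r.symm' h1, h2.symm⟩
    · rintro x y z ⟨h1, h2⟩ ⟨h3, h4⟩
      exact ⟨r.trans' h1 h3, h2.trans h4⟩⟩

@[simp] lemma spl_rel {V : Type*} [Fintype V] [DecidableEq V] (r : Setoid V) (w x y : V) :
    (spl r w) x y ↔ (r x y ∧ (x = w ↔ y = w)) := Iff.rfl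

/-- If splitting `b` off from equitable `r` is still equitable, then adjacency to `b` is
constant on each `r`-class (away from `b`). -/
lemma adj_of_stall {r : Setoid V} {b x z : V}
    (hst : EquitS X (spl r b)) (hxz : r x z) (hxb : x ≠ b) (hzb : z ≠ b)
    (hadj : X.Adj x b) : X.Adj z b := by
  have h := hst x z ⟨hxz, by simp [hxb, hzb]⟩ b
  have hsimp : ∀ a : V, NCnt X (spl r b) a b = (univ.filter fun y => X.Adj a y ∧ y = b).card := by
    intro a
    unfold NCnt
    congr 1
    ext y
    simp only [Finset.mem_filter, Finset.mem_univ, true_and, spl_rel, eq_self_iff_true,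
      iff_true]
    constructor
    · rintro ⟨ha, _, h2⟩
      exact ⟨ha, h2⟩
    · rintro ⟨ha, rfl⟩
      exact ⟨ha, r.refl' _, rfl⟩
  rw [hsimp x, hsimp z] at h
  have hmem : b ∈ univ.filter fun y => X.Adj x y ∧ y = b := by
    simp [hadj]
  have hpos : 0 < (univ.filter fun y => X.Adj z y ∧ y = b).card := by
    rw [← h]
    exact Finset.card_pos.2 ⟨b, hmem⟩
  obtain ⟨y, hy⟩ := Finset.card_pos.1 hpos
  simp only [Finset.mem_filter, Finset.mem_univ, true_and] at hy
  exact hy.2 ▸ hy.1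

/-- Two distinct related vertices cannot both be "stalling" in a twin-free graph. -/
lemma not_both_stall
    (htf : ∀ u v : V, u ≠ v → X.neighborSet u \ {v} ≠ X.neighborSet v \ {u})
    {T : Finset V} {u v : V} (huv : (rho X T) u v) (hne : u ≠ v)
    (hsu : EquitS X (spl (rho X T) u)) (hsv : EquitS X (spl (rho X T) v)) : False := by
  have key : ∀ a b z : V, (rho X T) a b → EquitS X (spl (rho X T) b) → z ≠ b →
      X.Adj a z → X.Adj b z := by
    intro a b z hab hst hzb hadj
    have h := equitS_rho X T a b hab z
    unfold NCnt at h
    have hmem : z ∈ univ.filter fun x => X.Adj a x ∧ (rho X T) x z := by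
      simp [hadj, (rho X T).refl' z]
    have hpos : 0 < (univ.filter fun x => X.Adj b x ∧ (rho X T) x z).card := by
      rw [← h]
      exact Finset.card_pos.2 ⟨z, hmem⟩
    obtain ⟨x, hx⟩ := Finset.card_pos.1 hpos
    simp only [Finset.mem_filter, Finset.mem_univ, true_and] at hx
    have hxb : x ≠ b := fun e => X.irrefl (e ▸ hx.1)
    exact (adj_of_stall X hst hx.2 hxb hzb hx.1.symm).symm
  apply htf u v hne
  ext z
  simp only [Set.mem_diff, SimpleGraph.mem_neighborSet, Set.mem_singleton_iff]
  constructor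
  · rintro ⟨hadj, hzv⟩
    exact ⟨key u v z huv hsv hzv hadj, fun e => X.irrefl (e ▸ hadj)⟩
  · rintro ⟨hadj, hzu⟩
    exact ⟨key v u z ((rho X T).symm' huv) hsu hzu hadj, fun e => X.irrefl (e ▸ hadj)⟩

/-- Number of classes of a setoid. -/
noncomputable def ncl (r : Setoid V) : ℕ := Fintype.card (Quotient r)

lemma ncl_le_card (r : Setoid V) : ncl r ≤ Fintype.card V :=
  Fintype.card_le_of_surjective (Quotient.mk r) (fun q => q.exists_rep)

lemma ncl_lt {r s : Setoid V} (hrs : r ≤ s) {x y : V} (hs : s x y) (hr : ¬ r x y) :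
    ncl s < ncl r := by
  have hf : ∀ a b : V, r a b → Quotient.mk s a = Quotient.mk s b :=
    fun a b h => Quotient.sound (Setoid.le_def.1 hrs h)
  let f : Quotient r → Quotient s := Quotient.lift (fun a => Quotient.mk s a) hf
  have hsurj : Function.Surjective f := by
    intro q
    obtain ⟨a, rfl⟩ := q.exists_rep
    exact ⟨Quotient.mk r a, rfl⟩
  have hninj : ¬ Function.Injective f := by
    intro hinj
    have h1 : f (Quotient.mk r x) = f (Quotient.mk r y) := Quotient.sound hs
    exact hr (Quotient.exact (hinj h1))
  exact Fintype.card_lt_of_surjective_not_injective f hsurj hninj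

/-- The key step: if `rho T` is not discrete, one can remove a vertex of `T` gaining
at least two classes. -/
lemma step
    (htf : ∀ u v : V, u ≠ v → X.neighborSet u \ {v} ≠ X.neighborSet v \ {u})
    {T : Finset V} {u v : V} (huv : (rho X T) u v) (hne : u ≠ v) :
    ∃ w ∈ T, ncl (rho X T) + 2 ≤ ncl (rho X (T.erase w)) := by
  have hmemT : u ∈ T ∧ v ∈ T := by
    rcases Setoid.le_def.1 (rho_le X T) huv with rfl | h
    · exact absurd rfl hne
    · exact h
  -- choose a non-stalling w together with a partner w'
  obtain ⟨w, w', hwT, hww', hne', hnst⟩ :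
      ∃ w w' : V, w ∈ T ∧ (rho X T) w w' ∧ w' ≠ w ∧ ¬ EquitS X (spl (rho X T) w) := by
    by_cases hsu : EquitS X (spl (rho X T) u)
    · refine ⟨v, u, hmemT.2, (rho X T).symm' huv, hne, fun hsv => ?_⟩
      exact not_both_stall X htf huv hne hsu hsv
    · exact ⟨u, v, hmemT.1, huv, hne.symm, hsu⟩
  refine ⟨w, hwT, ?_⟩
  set ρ := rho X T with hρ
  set σ := spl ρ w with hσ
  set ρ' := rho X (T.erase w) with hρ'
  have h1 : ρ' ≤ ρ := by
    apply sSup_le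
    rintro r ⟨hre, hrle⟩
    exact le_rho X hre (hrle.trans (piT_mono (Finset.erase_subset w T)))
  have h2 : ρ' ≤ σ := by
    rw [Setoid.le_def]
    intro x y hxy
    refine ⟨Setoid.le_def.1 h1 hxy, ?_⟩
    rcases Setoid.le_def.1 (rho_le X (T.erase w)) hxy with rfl | hm
    · exact Iff.rfl
    · simp only [Finset.mem_erase] at hm
      exact ⟨fun e => absurd e hm.1.1, fun e => absurd e hm.2.1⟩
  have h3 : ¬ σ ≤ ρ' := by
    intro hle
    have : ρ' = σ := le_antisymm h2 hle
    exact hnst (this ▸ equitS_rho X (T.erase w))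
  have hex : ∃ x y : V, σ x y ∧ ¬ ρ' x y := by
    by_contra hc
    push_neg at hc
    exact h3 (Setoid.le_def.2 fun {x y} h => hc x y h)
  obtain ⟨x, y, hσxy, hρ'xy⟩ := hex
  have lt1 : ncl σ < ncl ρ' := ncl_lt h2 hσxy hρ'xy
  have lt2 : ncl ρ < ncl σ := by
    refine ncl_lt ?_ hww' ?_
    · rw [Setoid.le_def]
      intro a b hab
      exact hab.1
    · rintro ⟨_, hiff⟩
      exact hne' (hiff.1 rfl)
  omega

lemma main_ind
    (htf : ∀ u v : V, u ≠ v → X.neighborSet u \ {v} ≠ X.neighborSet v \ {u}) :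
    ∀ (n : ℕ) (T : Finset V), T.card = n →
    ∃ T' : Finset V, T' ⊆ T ∧ (∀ x y : V, (rho X T') x y → x = y) ∧
      2 * T.card + ncl (rho X T) ≤ Fintype.card V + 2 * T'.card := by
  intro n
  induction n using Nat.strong_induction_on with
  | _ n ih =>
    intro T hT
    by_cases hd : ∀ x y : V, (rho X T) x y → x = y
    · exact ⟨T, Finset.Subset.refl T, hd, by have := ncl_le_card (rho X T); omega⟩
    · push_neg at hd
      obtain ⟨u, v, huv, hne⟩ := hd
      obtain ⟨w, hwT, hstep⟩ := step X htf huv hne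
      have hcard : (T.erase w).card < n := by
        rw [Finset.card_erase_of_mem hwT]
        have : 0 < T.card := Finset.card_pos.2 ⟨w, hwT⟩
        omega
      obtain ⟨T', hsub, hdisc, hineq⟩ := ih (T.erase w).card (by omega) (T.erase w) rfl
      refine ⟨T', hsub.trans (Finset.erase_subset w T), hdisc, ?_⟩
      rw [Finset.card_erase_of_mem hwT] at hineq
      have : 0 < T.card := Finset.card_pos.2 ⟨w, hwT⟩
      omega

end CRAux

/-- If `X` is twin-free and `|V| > 2k`, there is a set `S` of size `k` such that
individualizing all vertices of `V \ S` and running color refinement produces the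
discrete partition. -/
theorem twin_free_discrete
    {V : Type*} [Fintype V] [DecidableEq V]
    (X : SimpleGraph V) [DecidableRel X.Adj] (k : ℕ)
    (htf : ∀ u v : V, u ≠ v →
      X.neighborSet u \ {v} ≠ X.neighborSet v \ {u})
    (hcard : 2 * k < Fintype.card V) :
    ∃ S : Finset V, S.card = k ∧ DiscreteAfterIndividualizing X S := by
  classical
  obtain ⟨T', hsub, hdisc, hineq⟩ := main_ind X htf (univ : Finset V).card univ rfl
  have hone : 1 ≤ ncl (V := V) (rho X univ) := by
    have hV : 0 < Fintype.card V := by omega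
    have : Nonempty V := Fintype.card_pos_iff.mp hV
    obtain ⟨a⟩ := this
    have : 0 < ncl (V := V) (rho X univ) := Fintype.card_pos_iff.mpr ⟨Quotient.mk _ a⟩
    omega
  rw [Finset.card_univ] at hineq
  have hk : k ≤ T'.card := by omega
  obtain ⟨S, hSsub, hScard⟩ := Finset.exists_subset_card_eq hk
  refine ⟨S, hScard, ?_⟩
  intro α hα hcond a b hab
  let r : Setoid V := ⟨fun x y => α x = α y, ⟨fun _ => rfl, Eq.symm, Eq.trans⟩⟩
  have hrrel : ∀ x y : V, r x y ↔ α x = α y := fun _ _ => Iff.rfl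
  have hrE : EquitS X r := by
    intro x y hxy w
    have h := hα x y ((hrrel x y).1 hxy) (α w)
    unfold NCnt
    have he : ∀ a : V, (univ.filter fun z => X.Adj a z ∧ r z w)
        = (univ.filter fun z => X.Adj a z ∧ α z = α w) := by
      intro a
      apply Finset.filter_congr
      intro z _
      rw [hrrel z w]
    rw [he x, he y]
    convert h using 2
  have hrle : r ≤ piT T' := by
    rw [Setoid.le_def]
    intro x y hxy
    rcases hcond x y ((hrrel x y).1 hxy) with rfl | hm
    · exact Or.inl rfl
    · exact Or.inr ⟨hSsub hm.1, hSsub hm.2⟩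
  have : r ≤ rho X T' := le_rho X hrE hrle
  exact hdisc a b (Setoid.le_def.1 this ((hrrel a b).2 hab))
end

section
/- Let X = (V,E) be a graph and S ⊆ V. If the partition N[S] of V \ S by neighborhoods inside S has m parts B₁,...,B_m with m ≥ k, then choosing one vertex from each of B₁,...,B_k yields a set S' of size k such that individualizing V \ S' and running color refinement makes the graph discrete. -/
open Finset

/-- If the partition of `V \ S` by neighborhoods inside `S` has at least `k`
parts, then any set `S' ⊆ V \ S` of `k` vertices with pairwise distinct
neighborhoods in `S` (one vertex from each of `k` parts) is such that
individualizing `V \ S'` makes the graph discrete. -/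
theorem transversal_of_neighborhood_parts_discrete
    {V : Type*} [Fintype V] [DecidableEq V]
    (X : SimpleGraph V) [DecidableRel X.Adj] (S : Finset V) (k : ℕ)
    (hparts : k ≤ ((Sᶜ).image fun u => X.neighborFinset u ∩ S).card)
    (S' : Finset V) (hS'sub : S' ⊆ Sᶜ) (hS'card : S'.card = k)
    (hdist : ∀ u ∈ S', ∀ v ∈ S', u ≠ v →
      X.neighborFinset u ∩ S ≠ X.neighborFinset v ∩ S) :
    DiscreteAfterIndividualizing X S' := by
  intro α heq hcol u v huv
  by_contra hne
  rcases hcol u v huv with h | ⟨hu, hv⟩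
  · exact hne h
  have hdiff := hdist u hu v hv hne
  have key : ∀ a b : V, α a = α b → ∀ w ∈ S, X.Adj a w → ¬X.Adj b w → False := by
    intro a b hab w hwS haw hbw
    have h1 := heq a b hab (α w)
    have hw' : w ∉ S' := fun h => (mem_compl.mp (hS'sub h)) hwS
    have h2 : w ∈ univ.filter (fun x => X.Adj a x ∧ α x = α w) := by simp [haw]
    have h3 : univ.filter (fun x => X.Adj b x ∧ α x = α w) = ∅ := by
      apply Finset.eq_empty_of_forall_notMem
      intro x hx
      simp only [mem_filter, mem_univ, true_and] at hx
      rcases hcol x w hx.2 with rfl | ⟨_, hwin⟩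
      · exact hbw hx.1
      · exact hw' hwin
    rw [h3, Finset.card_empty] at h1
    rw [Finset.card_eq_zero.mp h1] at h2
    exact absurd h2 (Finset.notMem_empty _)
  have hex : ∃ w, (w ∈ X.neighborFinset u ∩ S ∧ w ∉ X.neighborFinset v ∩ S) ∨
      (w ∈ X.neighborFinset v ∩ S ∧ w ∉ X.neighborFinset u ∩ S) := by
    by_contra h'
    push_neg at h'
    apply hdiff
    ext w
    exact ⟨fun hw => (h' w).1 hw, fun hw => (h' w).2 hw⟩
  obtain ⟨w, hcase⟩ := hex
  rcases hcase with ⟨hw1, hw2⟩ | ⟨hw1, hw2⟩ <;>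
    simp only [mem_inter, SimpleGraph.mem_neighborFinset, not_and] at hw1 hw2
  · exact key u v huv w hw1.2 hw1.1 (fun h => hw2 h hw1.2)
  · exact key v u huv.symm w hw1.2 hw1.1 (fun h => hw2 h hw1.2)
end

section
/- Consider the CFI gadget on three vertex pairs P_i = {v_i, v'_i}, P_j = {v_j, v'_j}, P_k = {v_k, v'_k} with four middle vertices f_{00}, f_{01}, f_{10}, f_{11}, where f_{ab} is adjacent to the a-th vertex of P_i and the b-th vertex of P_j, and v_k is adjacent to f_{00}, f_{11} while v'_k is adjacent to f_{01}, f_{10}. Then every color-preserving automorphism of this gadget (colors: P_i, P_j, P_k, F = {f_{00},f_{01},f_{10},f_{11}} are color classes) flips either none or exactly two of the three pairs P_i, P_j, P_k. -/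
open Finset

/-- Vertices of the CFI gadget: `Sum.inl (t, x)` is the `x`-th vertex of the pair
`P_t` (`t = 0, 1, 2` for `P_i, P_j, P_k`), and `Sum.inr (a, b)` is the middle
vertex `f_{ab}`. -/
abbrev CFIVertex : Type := (Fin 3 × Fin 2) ⊕ (Fin 2 × Fin 2)

/-- The CFI gadget graph: `f_{ab}` is adjacent to the `a`-th vertex of `P_i` and
the `b`-th vertex of `P_j`; `v_k` (index 0 in `P_k`) is adjacent to `f_{00}, f_{11}`
and `v'_k` (index 1) to `f_{01}, f_{10}`. -/
def CFIGraph : SimpleGraph CFIVertex :=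
  SimpleGraph.fromRel (fun u v =>
    match u, v with
    | Sum.inr (a, b), Sum.inl (t, x) =>
        (t = 0 ∧ x = a) ∨ (t = 1 ∧ x = b) ∨
        (t = 2 ∧ ((x = 0 ∧ a = b) ∨ (x = 1 ∧ a ≠ b)))
    | _, _ => False)

/-- The coloring: each pair `P_t` is a color class, and `F` is a color class. -/
def CFIColor : CFIVertex → Fin 4
  | Sum.inl (t, _) => t.castSucc
  | Sum.inr _ => 3

/-!
The middle vertex `f_{ab}` is adjacent to exactly one vertex of each of `P_i, P_j, P_k`: the one
with index `a`, `b`, `a + b` (mod 2). A color-preserving automorphism maps `f_{00}` to some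
`f_{ab}`, hence sends the `0`-th vertex of each pair to the vertex with index `a`, `b`, `a + b`.
The flipped pairs are those where this index is `1`, and an even number of `a, b, a + b` are `1`.
-/
theorem cfiGraph_adj_inr_inl_iff (a b : Fin 2) (t : Fin 3) (x : Fin 2) :
    CFIGraph.Adj (Sum.inr (a, b)) (Sum.inl (t, x)) ↔ x = ![a, b, a + b] t := by
  simp only [CFIGraph, SimpleGraph.fromRel_adj]
  revert a b t x
  decide

theorem exists_eq_inl_of_cfiColor_eq {w : CFIVertex} {t : Fin 3} {x : Fin 2}
    (h : CFIColor w = CFIColor (Sum.inl (t, x))) : ∃ y, w = Sum.inl (t, y) := by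
  rcases w with ⟨s, y⟩ | p
  · exact ⟨y, by simpa [CFIColor] using h⟩
  · fin_cases t <;> simp [CFIColor] at h

theorem exists_eq_inr_of_cfiColor_eq {w : CFIVertex} {p : Fin 2 × Fin 2}
    (h : CFIColor w = CFIColor (Sum.inr p)) : ∃ q, w = Sum.inr q := by
  rcases w with ⟨s, y⟩ | q
  · fin_cases s <;> simp [CFIColor] at h
  · exact ⟨q, rfl⟩

theorem card_filter_vecCons_add_eq_one (a b : Fin 2) :
    (univ.filter fun t : Fin 3 => ![a, b, a + b] t = 1).card = 0 ∨
    (univ.filter fun t : Fin 3 => ![a, b, a + b] t = 1).card = 2 := by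
  revert a b
  decide

/-- Every color-preserving automorphism of the CFI gadget flips either none or
exactly two of the three pairs `P_i, P_j, P_k`. -/
theorem cfi_automorphism_flips_even
    (σ : Equiv.Perm CFIVertex)
    (hadj : ∀ u v : CFIVertex, CFIGraph.Adj (σ u) (σ v) ↔ CFIGraph.Adj u v)
    (hcol : ∀ v : CFIVertex, CFIColor (σ v) = CFIColor v) :
    (univ.filter fun t : Fin 3 =>
        σ (Sum.inl (t, 0)) = Sum.inl (t, 1)).card = 0 ∨
    (univ.filter fun t : Fin 3 =>
        σ (Sum.inl (t, 0)) = Sum.inl (t, 1)).card = 2 := by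
  obtain ⟨⟨a, b⟩, hf⟩ := exists_eq_inr_of_cfiColor_eq (hcol (Sum.inr (0, 0)))
  have hσ : ∀ t, σ (Sum.inl (t, 0)) = Sum.inl (t, ![a, b, a + b] t) := by
    intro t
    obtain ⟨y, hy⟩ := exists_eq_inl_of_cfiColor_eq (hcol (Sum.inl (t, 0)))
    have hf_adj := (hadj _ _).2 ((cfiGraph_adj_inr_inl_iff 0 0 t 0).2 (by fin_cases t <;> rfl))
    rw [hf, hy, cfiGraph_adj_inr_inl_iff] at hf_adj
    rw [hy, hf_adj]
  simp only [hσ, Sum.inl.injEq, Prod.mk.injEq, true_and]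
  exact card_filter_vecCons_add_eq_one a b
end

section
/- Let F be a 3-CNF formula over variable set V partitioned as V = V₁ ⊔ ... ⊔ V_k, with clauses C₁,...,C_m. For each i and each truth assignment a to V_i, let S_{i,a} = {m+i} ∪ {j : assignment a satisfies clause C_j} ⊆ {1,...,m+k}. Then the collection {S_{i,a}} has a set cover of the universe {1,...,m+k} of size k if and only if F is satisfiable. -/
open Finset

/-- For a 3-CNF formula with clauses `C_1,...,C_m` over variables partitioned into
`V_1,...,V_k`, with `S_{i,a} = {m+i} ∪ {j : a satisfies C_j}` for each part `i` and
assignment `a`, the collection `{S_{i,a}}` has a set cover of `{1,...,m+k}` of size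
`k` iff the formula is satisfiable. Here the universe is `Fin m ⊕ Fin k` and a
clause is a set of at most three literals (variable–polarity pairs). -/
theorem mini_set_cover_iff_satisfiable
    {Var : Type*} [Fintype Var] [DecidableEq Var]
    (m k : ℕ) (C : Fin m → Finset (Var × Bool))
    (h3 : ∀ j : Fin m, (C j).card ≤ 3)
    (p : Var → Fin k) :
    (∃ T : Finset (Fin k × (Var → Bool)), T.card = k ∧
      ∀ u : Fin m ⊕ Fin k, ∃ ia ∈ T,
        u ∈ ({Sum.inr ia.1} ∪
          ((univ : Finset (Fin m)).filter fun j =>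
            ∃ l ∈ C j, p l.1 = ia.1 ∧ ia.2 l.1 = l.2).image Sum.inl :
          Finset (Fin m ⊕ Fin k))) ↔
    (∃ a : Var → Bool, ∀ j : Fin m, ∃ l ∈ C j, a l.1 = l.2) := by
  constructor
  · rintro ⟨T, hTcard, hcov⟩
    set f : {x // x ∈ T} → Fin k := fun t => t.1.1 with hf
    have hsurj : Function.Surjective f := by
      intro i
      obtain ⟨ia, hia, hmem⟩ := hcov (Sum.inr i)
      refine ⟨⟨ia, hia⟩, ?_⟩
      simp only [mem_union, mem_singleton, mem_image, mem_filter] at hmem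
      rcases hmem with h | ⟨j, _, h⟩
      · exact (Sum.inr.inj h).symm
      · exact absurd h (by simp)
    have hbij : Function.Bijective f := by
      rw [Fintype.bijective_iff_surjective_and_card]
      exact ⟨hsurj, by simp [hTcard]⟩
    set e := Equiv.ofBijective f hbij with he
    refine ⟨fun v => ((e.symm (p v)) : Fin k × (Var → Bool)).2 v, fun j => ?_⟩
    obtain ⟨ia, hia, hmem⟩ := hcov (Sum.inl j)
    simp only [mem_union, mem_singleton, mem_image, mem_filter, mem_univ, true_and] at hmem
    rcases hmem with h | ⟨j', hj', h⟩
    · exact absurd h (by simp)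
    · obtain rfl : j' = j := Sum.inl.inj h
      obtain ⟨l, hl, hp, hval⟩ := hj'
      refine ⟨l, hl, ?_⟩
      have h1 : e ⟨ia, hia⟩ = ia.1 := rfl
      have h2 : e.symm ia.1 = ⟨ia, hia⟩ := by rw [← h1, Equiv.symm_apply_apply]
      show ((e.symm (p l.1)) : Fin k × (Var → Bool)).2 l.1 = l.2
      rw [hp, h2]
      exact hval
  · rintro ⟨a, ha⟩
    refine ⟨(univ : Finset (Fin k)).image (fun i => (i, a)), ?_, ?_⟩
    · rw [card_image_of_injective _ (fun i i' h => (Prod.mk.injEq .. ▸ h).1), card_univ,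
        Fintype.card_fin]
    · intro u
      rcases u with j | i
      · obtain ⟨l, hl, hval⟩ := ha j
        refine ⟨(p l.1, a), mem_image.2 ⟨p l.1, mem_univ _, rfl⟩, ?_⟩
        simp only [mem_union, mem_singleton, mem_image, mem_filter, mem_univ, true_and]
        exact Or.inr ⟨j, ⟨l, hl, rfl, hval⟩, rfl⟩
      · exact ⟨(i, a), mem_image.2 ⟨i, mem_univ _, rfl⟩, by simp⟩
end
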